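/- Let M = SE₂(3) × se(3) and let B = SE₂(3) ⋉ se(3) be the group of pairs (C, γ) with C ∈ SE₂(3), γ ∈ se(3) and product (C_X, γ_X)(C_Y, γ_Y) = (C_X C_Y, γ_X + B(C_X) γ_Y B(C_X)⁻¹), where B(C) ∈ SE(3) is formed from the rotation block and first translation column of C. Then the map φ : B × M → M defined by φ((C, γ), (P, Bᵦ)) = (P C, B(C)⁻¹ (Bᵦ − γ) B(C)) is a transitive right group action of B on M. -/

import Mathlib

/-!
`B` is multiplicative on `SE₂(3)`, and `B(C)⁻¹ γ B(C)` stays in `se(3)` because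
`Rᵀ ω^∧ R = (Rᵀ ω)^∧` for `R ∈ SO(3)` (the cofactor identity `Mᵀ ω^∧ M = (adj M ω)^∧`).
The action axioms are then formal identities between invertible matrices, and
`φ((C, γ), (P₁, B₁)) = (P₂, B₂)` is solved by `C = P₁⁻¹ P₂`, `γ = B₁ − B(C) B₂ B(C)⁻¹`.
-/

open Matrix

noncomputable section

abbrev V3 := Fin 3 → ℝ
abbrev Mat3 := Matrix (Fin 3) (Fin 3) ℝ
abbrev Mat4 := Matrix (Fin 4) (Fin 4) ℝ
abbrev Mat5 := Matrix (Fin 5) (Fin 5) ℝ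

/-- `SO(3)`: real 3×3 matrices with `Rᵀ R = I` and `det R = 1`. -/
def SO3 (A : Mat3) : Prop := Aᵀ * A = 1 ∧ A.det = 1

/-- The 5×5 block matrix `[[A, a, b], [0, 1, 0], [0, 0, 1]]`. -/
def se23mk (A : Mat3) (a b : V3) : Mat5 :=
  Matrix.of fun i j =>
    if hi : (i : ℕ) < 3 then
      if hj : (j : ℕ) < 3 then A ⟨(i : ℕ), hi⟩ ⟨(j : ℕ), hj⟩
      else if (j : ℕ) = 3 then a ⟨(i : ℕ), hi⟩ else b ⟨(i : ℕ), hi⟩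
    else if (i : ℕ) = (j : ℕ) then 1 else 0

/-- `SE₂(3)`: 5×5 block matrices `[[A, a, b], [0, 1, 0], [0, 0, 1]]` with `A ∈ SO(3)`. -/
def SE23 (C : Mat5) : Prop := ∃ (A : Mat3) (a b : V3), SO3 A ∧ C = se23mk A a b

/-- `x^∧`: the 3×3 skew-symmetric matrix with `x^∧ y = x × y`. -/
def wedge (x : V3) : Mat3 :=
  !![0, -x 2, x 1; x 2, 0, -x 0; -x 1, x 0, 0]

/-- The 4×4 block matrix `[[ω^∧, u], [0, 0]]`. -/
def se3algMk (ω u : V3) : Mat4 :=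
  Matrix.of fun i j =>
    if hi : (i : ℕ) < 3 then
      if hj : (j : ℕ) < 3 then wedge ω ⟨(i : ℕ), hi⟩ ⟨(j : ℕ), hj⟩
      else u ⟨(i : ℕ), hi⟩
    else 0

/-- `se(3)`: 4×4 block matrices `[[ω^∧, u], [0, 0]]` with `ω, u ∈ ℝ³`. -/
def se3Alg (M : Mat4) : Prop := ∃ ω u : V3, M = se3algMk ω u

/-- `B(C) ∈ SE(3)`: the 4×4 matrix formed from the rotation block `A` and the first
translation column `a` (the velocity column) of `C ∈ SE₂(3)`. -/
def Bproj (C : Mat5) : Mat4 :=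
  Matrix.of fun i j =>
    if hi : (i : ℕ) < 3 then
      if hj : (j : ℕ) < 3 then
        C (Fin.castLE (by norm_num) i) (Fin.castLE (by norm_num) j)
      else C (Fin.castLE (by norm_num) i) 3
    else if (i : ℕ) = (j : ℕ) then 1 else 0

/-- The product of the Semi-Direct Bias group `B = SE₂(3) ⋉ se(3)`:
`(C_X, γ_X)(C_Y, γ_Y) = (C_X C_Y, γ_X + B(C_X) γ_Y B(C_X)⁻¹)`. -/
def sdMul (X : Mat5 × Mat4) (Y : Mat5 × Mat4) : Mat5 × Mat4 :=
  (X.1 * Y.1, X.2 + Bproj X.1 * Y.2 * (Bproj X.1)⁻¹)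

/-- The action `φ((C, γ), (P, Bᵦ)) = (P C, B(C)⁻¹ (Bᵦ − γ) B(C))` of
`B = SE₂(3) ⋉ se(3)` on `M = SE₂(3) × se(3)`. -/
def phiSD (C : Mat5) (γ : Mat4) (P : Mat5) (Bb : Mat4) : Mat5 × Mat4 :=
  (P * C, (Bproj C)⁻¹ * (Bb - γ) * Bproj C)

theorem conj_cancel_of_inv_mul_eq_one {n R : Type*} [Fintype n] [DecidableEq n] [CommRing R]
    {Y : Matrix n n R} (hY : Y⁻¹ * Y = 1) (h : Matrix n n R) : Y⁻¹ * (Y * h * Y⁻¹) * Y = h := by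
  calc Y⁻¹ * (Y * h * Y⁻¹) * Y = (Y⁻¹ * Y) * h * (Y⁻¹ * Y) := by noncomm_ring
    _ = h := by rw [hY, one_mul, mul_one]

/-- The 4×4 block matrix `[[A, a], [0, 1]]`. -/
def se3mk (A : Mat3) (a : V3) : Mat4 :=
  Matrix.of fun i j =>
    if hi : (i : ℕ) < 3 then
      if hj : (j : ℕ) < 3 then A ⟨(i : ℕ), hi⟩ ⟨(j : ℕ), hj⟩
      else a ⟨(i : ℕ), hi⟩
    else if (i : ℕ) = (j : ℕ) then 1 else 0

/-- The 4×4 block matrix `[[W, u], [0, 0]]`, an element of the affine Lie algebra `aff(3)`. -/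
def aff3algMk (W : Mat3) (u : V3) : Mat4 :=
  Matrix.of fun i j =>
    if hi : (i : ℕ) < 3 then
      if hj : (j : ℕ) < 3 then W ⟨(i : ℕ), hi⟩ ⟨(j : ℕ), hj⟩
      else u ⟨(i : ℕ), hi⟩
    else 0

theorem se3algMk_eq_aff3algMk (ω u : V3) : se3algMk ω u = aff3algMk (wedge ω) u := rfl

theorem se3mk_one : se3mk 1 0 = 1 := by
  ext i j
  fin_cases i <;> fin_cases j <;> simp [se3mk, one_apply]

theorem se23mk_one : se23mk 1 0 0 = 1 := by
  ext i j
  fin_cases i <;> fin_cases j <;> simp [se23mk, one_apply]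

theorem Bproj_one : Bproj 1 = 1 := by
  ext i j
  fin_cases i <;> fin_cases j <;> simp [Bproj, one_apply, Fin.castLE]

theorem se3mk_mul_se3mk (A A' : Mat3) (a a' : V3) :
    se3mk A a * se3mk A' a' = se3mk (A * A') (A *ᵥ a' + a) := by
  ext i j
  fin_cases i <;> fin_cases j <;>
    simp [se3mk, mul_apply, Fin.sum_univ_four, mulVec, dotProduct, Fin.sum_univ_three]

theorem se23mk_mul_se23mk (A A' : Mat3) (a b a' b' : V3) :
    se23mk A a b * se23mk A' a' b' = se23mk (A * A') (A *ᵥ a' + a) (A *ᵥ b' + b) := by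
  ext i j
  fin_cases i <;> fin_cases j <;>
    simp [se23mk, mul_apply, Fin.sum_univ_five, mulVec, dotProduct, Fin.sum_univ_three]

theorem se3mk_mul_aff3algMk (A : Mat3) (a : V3) (W : Mat3) (u : V3) :
    se3mk A a * aff3algMk W u = aff3algMk (A * W) (A *ᵥ u) := by
  ext i j
  fin_cases i <;> fin_cases j <;>
    simp [aff3algMk, se3mk, mul_apply, Fin.sum_univ_four, mulVec, dotProduct,
      Fin.sum_univ_three]

theorem aff3algMk_mul_se3mk (W : Mat3) (u : V3) (A : Mat3) (a : V3) :
    aff3algMk W u * se3mk A a = aff3algMk (W * A) (W *ᵥ a + u) := by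
  ext i j
  fin_cases i <;> fin_cases j <;>
    simp [aff3algMk, se3mk, mul_apply, Fin.sum_univ_four, mulVec, dotProduct,
      Fin.sum_univ_three]

theorem Bproj_se23mk (A : Mat3) (a b : V3) : Bproj (se23mk A a b) = se3mk A a := by
  ext i j
  fin_cases i <;> fin_cases j <;> simp [Bproj, se23mk, se3mk, Fin.castLE]

theorem se3algMk_sub_se3algMk (ω u ω' u' : V3) :
    se3algMk ω u - se3algMk ω' u' = se3algMk (ω - ω') (u - u') := by
  ext i j
  fin_cases i <;> fin_cases j <;> simp [se3algMk, wedge] <;> ring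

theorem transpose_mul_wedge_mul (M : Mat3) (ω : V3) :
    Mᵀ * wedge ω * M = wedge (adjugate M *ᵥ ω) := by
  rw [eta_fin_three M]
  ext i j
  fin_cases i <;> fin_cases j <;>
    simp [wedge, adjugate_fin_three, mul_apply, Fin.sum_univ_three, mulVec, dotProduct] <;>
    ring

namespace SO3

variable {A B : Mat3}

theorem mul_transpose_self (hA : SO3 A) : A * Aᵀ = 1 := mul_eq_one_comm.mp hA.1

theorem mul (hA : SO3 A) (hB : SO3 B) : SO3 (A * B) := by
  refine ⟨?_, by rw [det_mul, hA.2, hB.2, one_mul]⟩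
  calc (A * B)ᵀ * (A * B) = Bᵀ * (Aᵀ * A) * B := by rw [transpose_mul]; noncomm_ring
    _ = 1 := by rw [hA.1, mul_one, hB.1]

theorem transpose (hA : SO3 A) : SO3 Aᵀ :=
  ⟨by rw [transpose_transpose]; exact hA.mul_transpose_self, by rw [det_transpose, hA.2]⟩

theorem adjugate_eq_transpose (hA : SO3 A) : adjugate A = Aᵀ := by
  rw [← inv_eq_left_inv hA.1, inv_def, hA.2, Ring.inverse_one, one_smul]

theorem transpose_mul_wedge_mul (hA : SO3 A) (ω : V3) :
    Aᵀ * wedge ω * A = wedge (Aᵀ *ᵥ ω) := by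
  rw [_root_.transpose_mul_wedge_mul, hA.adjugate_eq_transpose]

theorem se3mk_inv (hA : SO3 A) (a : V3) : (se3mk A a)⁻¹ = se3mk Aᵀ (-(Aᵀ *ᵥ a)) := by
  refine inv_eq_left_inv ?_
  rw [se3mk_mul_se3mk, hA.1, add_neg_cancel, se3mk_one]

theorem se23mk_inv (hA : SO3 A) (a b : V3) :
    (se23mk A a b)⁻¹ = se23mk Aᵀ (-(Aᵀ *ᵥ a)) (-(Aᵀ *ᵥ b)) := by
  refine inv_eq_left_inv ?_
  rw [se23mk_mul_se23mk, hA.1, add_neg_cancel, add_neg_cancel, se23mk_one]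

theorem se3mk_inv_mul_se3algMk_mul (hA : SO3 A) (a ω u : V3) :
    (se3mk A a)⁻¹ * se3algMk ω u * se3mk A a
      = se3algMk (Aᵀ *ᵥ ω) (Aᵀ *ᵥ (wedge ω *ᵥ a + u)) := by
  rw [hA.se3mk_inv, se3algMk_eq_aff3algMk, se3mk_mul_aff3algMk, aff3algMk_mul_se3mk,
    hA.transpose_mul_wedge_mul, mulVec_add, mulVec_mulVec, se3algMk_eq_aff3algMk]

end SO3

namespace SE23

variable {C D : Mat5}

theorem mul (hC : SE23 C) (hD : SE23 D) : SE23 (C * D) := by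
  obtain ⟨A, a, b, hA, rfl⟩ := hC
  obtain ⟨A', a', b', hA', rfl⟩ := hD
  exact ⟨_, _, _, hA.mul hA', se23mk_mul_se23mk A A' a b a' b'⟩

theorem inv (hC : SE23 C) : SE23 C⁻¹ := by
  obtain ⟨A, a, b, hA, rfl⟩ := hC
  exact ⟨_, _, _, hA.transpose, hA.se23mk_inv a b⟩

theorem inv_mul_cancel (hC : SE23 C) : C⁻¹ * C = 1 := by
  obtain ⟨A, a, b, hA, rfl⟩ := hC
  rw [hA.se23mk_inv, se23mk_mul_se23mk, hA.1, add_neg_cancel, add_neg_cancel, se23mk_one]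

theorem mul_inv_cancel (hC : SE23 C) : C * C⁻¹ = 1 := mul_eq_one_comm.mp hC.inv_mul_cancel

theorem Bproj_mul (hC : SE23 C) (hD : SE23 D) : Bproj (C * D) = Bproj C * Bproj D := by
  obtain ⟨A, a, b, -, rfl⟩ := hC
  obtain ⟨A', a', b', -, rfl⟩ := hD
  rw [se23mk_mul_se23mk, Bproj_se23mk, Bproj_se23mk, Bproj_se23mk, se3mk_mul_se3mk]

theorem Bproj_inv (hC : SE23 C) : Bproj C⁻¹ = (Bproj C)⁻¹ := by
  refine (inv_eq_left_inv ?_).symm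
  rw [← hC.inv.Bproj_mul hC, hC.inv_mul_cancel, Bproj_one]

theorem Bproj_inv_mul_cancel (hC : SE23 C) : (Bproj C)⁻¹ * Bproj C = 1 := by
  rw [← hC.Bproj_inv, ← hC.inv.Bproj_mul hC, hC.inv_mul_cancel, Bproj_one]

end SE23

namespace se3Alg

variable {γ γ' : Mat4} {C : Mat5}

theorem sub (hγ : se3Alg γ) (hγ' : se3Alg γ') : se3Alg (γ - γ') := by
  obtain ⟨ω, u, rfl⟩ := hγ
  obtain ⟨ω', u', rfl⟩ := hγ'
  exact ⟨_, _, se3algMk_sub_se3algMk ω u ω' u'⟩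

theorem conj_Bproj (hγ : se3Alg γ) (hC : SE23 C) : se3Alg ((Bproj C)⁻¹ * γ * Bproj C) := by
  obtain ⟨ω, u, rfl⟩ := hγ
  obtain ⟨A, a, b, hA, rfl⟩ := hC
  rw [Bproj_se23mk, hA.se3mk_inv_mul_se3algMk_mul]
  exact ⟨_, _, rfl⟩

theorem conj_Bproj_inv (hγ : se3Alg γ) (hC : SE23 C) : se3Alg (Bproj C * γ * (Bproj C)⁻¹) := by
  have hunit : IsUnit (Bproj C).det := isUnit_det_of_left_inverse hC.Bproj_inv_mul_cancel
  simpa [hC.Bproj_inv, nonsing_inv_nonsing_inv _ hunit] using hγ.conj_Bproj hC.inv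

end se3Alg

theorem phiSD_one (P : Mat5) (Bb : Mat4) : phiSD 1 0 P Bb = (P, Bb) := by
  simp [phiSD, Bproj_one]

theorem phiSD_phiSD {CX CY : Mat5} (hCX : SE23 CX) (hCY : SE23 CY) (γX γY : Mat4) (P : Mat5)
    (Bb : Mat4) :
    phiSD CX γX (phiSD CY γY P Bb).1 (phiSD CY γY P Bb).2
      = phiSD (sdMul (CY, γY) (CX, γX)).1 (sdMul (CY, γY) (CX, γX)).2 P Bb := by
  simp only [phiSD, sdMul, hCY.Bproj_mul hCX, Matrix.mul_inv_rev]
  refine Prod.ext (mul_assoc _ _ _) ?_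
  set X := Bproj CX
  set Y := Bproj CY
  calc X⁻¹ * (Y⁻¹ * (Bb - γY) * Y - γX) * X
      = X⁻¹ * (Y⁻¹ * (Bb - γY) * Y - Y⁻¹ * (Y * γX * Y⁻¹) * Y) * X := by
        rw [conj_cancel_of_inv_mul_eq_one hCY.Bproj_inv_mul_cancel]
    _ = X⁻¹ * Y⁻¹ * (Bb - (γY + Y * γX * Y⁻¹)) * (Y * X) := by noncomm_ring

theorem exists_phiSD_eq {P₁ P₂ : Mat5} {B₁ B₂ : Mat4} (hP₁ : SE23 P₁) (hB₁ : se3Alg B₁)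
    (hP₂ : SE23 P₂) (hB₂ : se3Alg B₂) :
    ∃ (C : Mat5) (γ : Mat4), SE23 C ∧ se3Alg γ ∧ phiSD C γ P₁ B₁ = (P₂, B₂) := by
  set C := P₁⁻¹ * P₂
  have hC : SE23 C := hP₁.inv.mul hP₂
  refine ⟨C, B₁ - Bproj C * B₂ * (Bproj C)⁻¹, hC, hB₁.sub (hB₂.conj_Bproj_inv hC), ?_⟩
  refine Prod.ext ?_ ?_
  · rw [phiSD, ← mul_assoc, hP₁.mul_inv_cancel, one_mul]
  · rw [phiSD, sub_sub_cancel, conj_cancel_of_inv_mul_eq_one hC.Bproj_inv_mul_cancel]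

/-- `φ` is a transitive right group action of the Semi-Direct Bias group
`B = SE₂(3) ⋉ se(3)` on `M = SE₂(3) × se(3)`. -/
theorem stmt11 :
    -- φ maps M into M
    (∀ (C : Mat5) (γ : Mat4) (P : Mat5) (Bb : Mat4),
      SE23 C → se3Alg γ → SE23 P → se3Alg Bb →
      SE23 (phiSD C γ P Bb).1 ∧ se3Alg (phiSD C γ P Bb).2) ∧
    -- identity axiom: φ((I₅, 0), ξ) = ξ
    (∀ (P : Mat5) (Bb : Mat4), phiSD 1 0 P Bb = (P, Bb)) ∧
    -- compatibility axiom: φ(X, φ(Y, ξ)) = φ(Y X, ξ)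
    (∀ (CX : Mat5) (γX : Mat4) (CY : Mat5) (γY : Mat4) (P : Mat5) (Bb : Mat4),
      SE23 CX → se3Alg γX → SE23 CY → se3Alg γY → SE23 P → se3Alg Bb →
      phiSD CX γX (phiSD CY γY P Bb).1 (phiSD CY γY P Bb).2
        = phiSD (sdMul (CY, γY) (CX, γX)).1 (sdMul (CY, γY) (CX, γX)).2 P Bb) ∧
    -- transitivity
    (∀ (P₁ : Mat5) (B₁ : Mat4) (P₂ : Mat5) (B₂ : Mat4),
      SE23 P₁ → se3Alg B₁ → SE23 P₂ → se3Alg B₂ →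
      ∃ (C : Mat5) (γ : Mat4), SE23 C ∧ se3Alg γ ∧
        phiSD C γ P₁ B₁ = (P₂, B₂)) := by
  refine ⟨?_, phiSD_one, ?_, ?_⟩
  · intro C γ P Bb hC hγ hP hBb
    exact ⟨hP.mul hC, (hBb.sub hγ).conj_Bproj hC⟩
  · intro CX γX CY γY P Bb hCX _ hCY _ _ _
    exact phiSD_phiSD hCX hCY γX γY P Bb
  · intro P₁ B₁ P₂ B₂ hP₁ hB₁ hP₂ hB₂
    exact exists_phiSD_eq hP₁ hB₁ hP₂ hB₂
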